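/- Let A ∈ Rⁿˣⁿ satisfy AᵀP + PA = −Q with P positive diagonal and Q positive definite, and let x* ∈ Rⁿ₊₊ satisfy r + Ax* = 0. Along solutions of the disturbed GLV system ẋ = diag(x)(r + Ax + d(t)) with ‖d(t)‖ ≤ α, the Lyapunov function V(x) = 2 Σᵢ pᵢ(xᵢ − x*ᵢ − x*ᵢ log(xᵢ/x*ᵢ)) satisfies V̇ ≤ −q_min ‖x − x*‖² + 2 p_max ‖x − x*‖ α, where q_min is the smallest eigenvalue of Q and p_max the largest diagonal entry of P. In particular V̇ < 0 whenever ‖x − x*‖ > 2 p_max α / q_min. -/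

import Mathlib

open Matrix

/-!
Along a trajectory, `d/dt (xᵢ − x*ᵢ − x*ᵢ log(xᵢ/x*ᵢ)) = (xᵢ − x*ᵢ) ẋᵢ / xᵢ`, and the per-capita
growth rate `r + Ax + d` equals `A(x − x*) + d` at an equilibrium `x*`. Writing `v = x − x*`, this
gives `V̇ = vᵀ(AᵀP + PA)v + 2 vᵀPd`: the first term is at most `−q_min ‖v‖²`, and the second is at
most `2 p_max ‖v‖ ‖d‖` by Cauchy–Schwarz.
-/

lemma HasDerivAt.sub_sub_mul_log_div {y : ℝ → ℝ} {c g t : ℝ} (hy : y t ≠ 0) (hc : c ≠ 0)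
    (hderiv : HasDerivAt y (y t * g) t) :
    HasDerivAt (fun s => y s - c - c * Real.log (y s / c)) ((y t - c) * g) t := by
  have hlog := (hderiv.div_const c).log (div_ne_zero hy hc)
  refine ((hderiv.sub_const c).fun_sub (hlog.const_mul c)).congr_deriv ?_
  field_simp

lemma mulVec_sub_eq_add_mulVec {ι : Type*} [Fintype ι] {R : Type*} [Ring R]
    {A : Matrix ι ι R} {r xs : ι → R} (heq : r + A *ᵥ xs = 0) (y : ι → R) :
    A *ᵥ (y - xs) = r + A *ᵥ y := by
  rw [mulVec_sub, eq_neg_of_add_eq_zero_right heq, sub_neg_eq_add, add_comm]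

lemma dotProduct_transpose_add_mulVec_self {ι : Type*} [Fintype ι] {R : Type*} [CommRing R]
    (M : Matrix ι ι R) (v : ι → R) :
    v ⬝ᵥ ((Mᵀ + M) *ᵥ v) = 2 * (v ⬝ᵥ M *ᵥ v) := by
  rw [add_mulVec, dotProduct_add, dotProduct_transpose_mulVec]
  ring

lemma dotProduct_diagonal_mul_mulVec {ι : Type*} [Fintype ι] [DecidableEq ι] {R : Type*}
    [CommRing R] (p : ι → R) (A : Matrix ι ι R) (v : ι → R) :
    v ⬝ᵥ (diagonal p * A) *ᵥ v = ∑ i, p i * (v i * (A *ᵥ v) i) := by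
  simp only [← mulVec_mulVec, dotProduct, mulVec_diagonal]
  exact Finset.sum_congr rfl fun i _ => by ring

lemma sum_mul_mul_le_mul_sqrt_mul_sqrt {ι : Type*} [Fintype ι] [Nonempty ι] {p : ι → ℝ} {M : ℝ}
    (hp : ∀ i, 0 ≤ p i) (hpM : ∀ i, p i ≤ M) (v w : ι → ℝ) :
    ∑ i, p i * (v i * w i) ≤ M * (√(∑ i, v i ^ 2) * √(∑ i, w i ^ 2)) := by
  have hM : 0 ≤ M := (hp (Classical.arbitrary ι)).trans (hpM _)
  calc ∑ i, p i * (v i * w i)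
      ≤ ∑ i, M * (|v i| * |w i|) := Finset.sum_le_sum fun i _ => by
        rw [← abs_mul]
        exact (mul_le_mul_of_nonneg_left (le_abs_self _) (hp i)).trans
          (mul_le_mul_of_nonneg_right (hpM i) (abs_nonneg _))
    _ = M * ∑ i, |v i| * |w i| := (Finset.mul_sum _ _ _).symm
    _ ≤ M * (√(∑ i, v i ^ 2) * √(∑ i, w i ^ 2)) := by
        gcongr
        simpa only [sq_abs] using Real.sum_mul_le_sqrt_mul_sqrt Finset.univ (|v ·|) (|w ·|)

lemma neg_mul_sq_add_mul_lt_zero {q b e : ℝ} (hq : 0 < q) (hb : 0 ≤ b) (he : b / q < e) :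
    -q * e ^ 2 + b * e < 0 := by
  have he_pos : 0 < e := (div_nonneg hb hq.le).trans_lt he
  have hqe : b < q * e := by rwa [div_lt_iff₀ hq, mul_comm] at he
  calc -q * e ^ 2 + b * e = e * (b - q * e) := by ring
    _ < 0 := mul_neg_of_pos_of_neg he_pos (sub_neg.mpr hqe)

theorem hasDerivAt_glv_lyapunov {ι : Type*} [Fintype ι] {A : Matrix ι ι ℝ} {r p xs : ι → ℝ}
    {x d : ℝ → ι → ℝ} {t : ℝ} (hxs : ∀ i, xs i ≠ 0) (hx : ∀ i, x t i ≠ 0)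
    (heq : r + A *ᵥ xs = 0)
    (hode : ∀ i, HasDerivAt (fun s => x s i) (x t i * (r i + ∑ j, A i j * x t j + d t i)) t) :
    HasDerivAt (fun s => 2 * ∑ i, p i * (x s i - xs i - xs i * Real.log (x s i / xs i)))
      (2 * ∑ i, p i * ((x t - xs) i * ((A *ᵥ (x t - xs)) i + d t i))) t := by
  refine (HasDerivAt.fun_sum fun i _ => ?_).const_mul 2
  rw [mulVec_sub_eq_add_mulVec heq]
  exact ((hode i).sub_sub_mul_log_div (hx i) (hxs i)).const_mul (p i)

/-- Robustness to bounded disturbances in the growth rates: with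
`AᵀP + PA = −Q`, `P = diag p` positive, `q_min` the smallest eigenvalue of `Q`
(so `q_min ‖v‖² ≤ vᵀQv`), `p_max` the largest diagonal entry of `P`, interior
equilibrium `x*`, and disturbance `‖d(t)‖ ≤ α`, the derivative of
`V(x) = 2 Σᵢ pᵢ(xᵢ − x*ᵢ − x*ᵢ log(xᵢ/x*ᵢ))` along solutions of
`ẋ = diag(x)(r + Ax + d(t))` satisfies
`V̇ ≤ −q_min ‖x − x*‖² + 2 p_max ‖x − x*‖ α`, hence `V̇ < 0` whenever
`‖x − x*‖ > 2 p_max α / q_min`. -/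
theorem glv_disturbed_lyapunov_bound {n : ℕ} [NeZero n]
    (A : Matrix (Fin n) (Fin n) ℝ) (r : Fin n → ℝ)
    (p : Fin n → ℝ) (hp : ∀ i, 0 < p i)
    (qmin : ℝ) (hqmin : 0 < qmin)
    (hQ : ∀ v : Fin n → ℝ,
      qmin * ∑ i, (v i) ^ 2 ≤
        v ⬝ᵥ ((-(Aᵀ * Matrix.diagonal p + Matrix.diagonal p * A)).mulVec v))
    (xs : Fin n → ℝ) (hxs : ∀ i, 0 < xs i) (heq : r + A.mulVec xs = 0)
    (x : ℝ → Fin n → ℝ) (hxpos : ∀ t i, 0 < x t i)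
    (d : ℝ → Fin n → ℝ) (αd : ℝ)
    (hd : ∀ t, Real.sqrt (∑ i, (d t i) ^ 2) ≤ αd)
    (hode : ∀ t i, HasDerivAt (fun s => x s i)
      (x t i * (r i + ∑ j, A i j * x t j + d t i)) t) :
    let pmax := Finset.univ.sup' Finset.univ_nonempty p
    let V : (Fin n → ℝ) → ℝ :=
      fun y => 2 * ∑ i, p i * (y i - xs i - xs i * Real.log (y i / xs i))
    let e : ℝ → ℝ := fun t => Real.sqrt (∑ i, (x t i - xs i) ^ 2)
    ∀ t D, HasDerivAt (fun s => V (x s)) D t →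
      D ≤ -qmin * (e t) ^ 2 + 2 * pmax * e t * αd ∧
      (e t > 2 * pmax * αd / qmin → D < 0) := by
  intro pmax V e t D hD
  set v := x t - xs
  have hDeq : D = 2 * ∑ i, p i * (v i * ((A *ᵥ v) i + d t i)) :=
    hD.unique (hasDerivAt_glv_lyapunov (fun i => (hxs i).ne') (fun i => (hxpos t i).ne') heq
      (hode t))
  have he_sq : e t ^ 2 = ∑ i, v i ^ 2 := Real.sq_sqrt (Finset.sum_nonneg fun i _ => sq_nonneg _)
  have hquad : 2 * ∑ i, p i * (v i * (A *ᵥ v) i) ≤ -qmin * e t ^ 2 := by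
    have h := hQ v
    rw [show Aᵀ * diagonal p = (diagonal p * A)ᵀ by rw [transpose_mul, diagonal_transpose],
      neg_mulVec, dotProduct_neg, dotProduct_transpose_add_mulVec_self, dotProduct_diagonal_mul_mulVec] at h
    rw [he_sq]
    linarith
  have hpmax : 0 ≤ pmax := (hp 0).le.trans (Finset.le_sup' p (Finset.mem_univ 0))
  have hpert : ∑ i, p i * (v i * d t i) ≤ pmax * (e t * αd) :=
    calc ∑ i, p i * (v i * d t i)
        ≤ pmax * (e t * √(∑ i, d t i ^ 2)) := sum_mul_mul_le_mul_sqrt_mul_sqrt (fun i => (hp i).le)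
          (fun i => Finset.le_sup' p (Finset.mem_univ i)) v (d t)
      _ ≤ pmax * (e t * αd) := by gcongr; exact hd t
  have hbound : D ≤ -qmin * e t ^ 2 + 2 * pmax * e t * αd := by
    simp only [hDeq, mul_add, Finset.sum_add_distrib]
    linarith
  refine ⟨hbound, fun hgt => hbound.trans_lt ?_⟩
  have hαd : 0 ≤ αd := (Real.sqrt_nonneg _).trans (hd t)
  have hb : 0 ≤ 2 * pmax * αd := by positivity
  simpa only [mul_right_comm _ (e t)] using neg_mul_sq_add_mul_lt_zero hqmin hb hgt
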